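/- For every δ ∈ ℝ with δ ≠ −2, every t > 0 and every x ∈ ℝ³ with x ≠ 0, one has the exact identity ∫_{S²} (1 + |x + tω|²)^{δ/2} dσ(ω) = 8π (⟨u⟩^{2+δ} − ⟨v⟩^{2+δ}) / ((2+δ)(⟨u⟩² − ⟨v⟩²)), where u = t − |x| and v = t + |x|. -/

import Mathlib

/-!
With `e = x / ‖x‖`, `c = 1 + t² + ‖x‖²` and `b = 2t‖x‖` the integrand is `(c + b⟪e, ω⟫) ^ (δ/2)`.
By Archimedes' hat-box theorem the image of `σ` under `ω ↦ ⟪e, ω⟫` is `2π` times Lebesgue measure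
on `[-1, 1]`, so the integral is `2π ∫_{-1}^{1} (c + bz) ^ (δ/2) dz`, an elementary integral
whose endpoints are `c ± b = ⟨v⟩², ⟨u⟩²`.

Archimedes' theorem for `f(⟪e, ω⟫)` comes from integrating `G(⟪e, y⟫)`, `G z = 3 f z + z f' z`,
over the unit ball in two ways. In polar coordinates the radial integral `∫₀¹ r² G(r s) dr` is
`f s`, since `r ↦ r³ f(r s)` is a primitive. Slicing orthogonally to `e`, the slice at height `z`
is a disc of area `π (1 - z²)`, and `∫_{-1}^{1} G z (1 - z²) dz = 2 ∫_{-1}^{1} f` by parts.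
-/

open MeasureTheory Real Filter

noncomputable section

abbrev E3 : Type := EuclideanSpace ℝ (Fin 3)

/-- Japanese bracket `⟨s⟩ = (1 + s²)^{1/2}`. -/
def jap (s : ℝ) : ℝ := Real.sqrt (1 + s ^ 2)

/-- The surface measure on the unit sphere `S² ⊂ ℝ³` (total mass `4π`). -/
def sphereM : Measure (Metric.sphere (0 : E3) 1) := (volume : Measure E3).toSphere

open Measure Set Metric Module intervalIntegral
open scoped RealInnerProductSpace

section Polar

variable {E : Type*} [NormedAddCommGroup E] [NormedSpace ℝ E] [FiniteDimensional ℝ E]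
  [MeasurableSpace E] [BorelSpace E] [Nontrivial E] (μ : Measure E) [μ.IsAddHaarMeasure]
  {G : Type*} [NormedAddCommGroup G] [NormedSpace ℝ G]

theorem integral_eq_integral_toSphere_integral_Ioi {F : E → G} (hF : Integrable F μ) :
    ∫ y, F y ∂μ = ∫ ω : sphere (0 : E) 1,
      (∫ r in Ioi (0 : ℝ), r ^ (finrank ℝ E - 1) • F (r • (ω : E))) ∂μ.toSphere := by
  have hmp := μ.measurePreserving_homeomorphUnitSphereProd
  have hemb := (homeomorphUnitSphereProd E).measurableEmbedding
  have hcompl : MeasurableSet ({0}ᶜ : Set E) := (measurableSet_singleton _).compl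
  have hpolar : (fun p : sphere (0 : E) 1 × Ioi (0 : ℝ) => F ((p.2 : ℝ) • (p.1 : E)))
      ∘ homeomorphUnitSphereProd E = fun y : ({0}ᶜ : Set E) => F y := by
    funext y
    simp [smul_inv_smul₀ (norm_ne_zero_iff.2 y.2)]
  have hint : Integrable (fun p : sphere (0 : E) 1 × Ioi (0 : ℝ) => F ((p.2 : ℝ) • (p.1 : E)))
      (μ.toSphere.prod (volumeIoiPow (finrank ℝ E - 1))) := by
    rw [← hmp.integrable_comp_emb hemb, hpolar]
    change Integrable (F ∘ Subtype.val) _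
    rwa [← (MeasurableEmbedding.subtype_coe hcompl).integrable_map_iff,
      map_comap_subtype_coe hcompl, restrict_compl_singleton]
  calc ∫ y, F y ∂μ = ∫ y : ({0}ᶜ : Set E), F y ∂(μ.comap (↑)) := by
        rw [integral_subtype_comap hcompl, restrict_compl_singleton]
    _ = ∫ p, F ((p.2 : ℝ) • (p.1 : E)) ∂(μ.toSphere.prod (volumeIoiPow (finrank ℝ E - 1))) := by
        rw [← hmp.integral_comp hemb, ← hpolar]
        rfl
    _ = _ := by
        rw [integral_prod _ hint]
        refine integral_congr_ae (.of_forall fun ω => ?_)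
        dsimp only
        rw [volumeIoiPow, integral_withDensity_eq_integral_toReal_smul (by fun_prop)
          (.of_forall fun _ => ENNReal.ofReal_lt_top),
          integral_subtype_comap measurableSet_Ioi
            (fun r : ℝ => (ENNReal.ofReal (r ^ (finrank ℝ E - 1))).toReal • F (r • (ω : E)))]
        refine setIntegral_congr_fun measurableSet_Ioi fun r hr => ?_
        rw [ENNReal.toReal_ofReal (pow_nonneg (le_of_lt hr) _)]

end Polar

def radialProfile (f f' : ℝ → ℝ) (z : ℝ) : ℝ := 3 * f z + z * f' z

section RadialProfile

variable {f f' : ℝ → ℝ} (hf : ∀ z ∈ Icc (-1 : ℝ) 1, HasDerivAt f (f' z) z)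
  (hf' : ContinuousOn f' (Icc (-1) 1))
include hf hf'

lemma continuousOn_radialProfile : ContinuousOn (radialProfile f f') (Icc (-1) 1) :=
  (continuousOn_const.mul (HasDerivAt.continuousOn hf)).add (continuousOn_id.mul hf')

lemma integral_sq_mul_radialProfile {s : ℝ} (hs : s ∈ Icc (-1 : ℝ) 1) :
    ∫ r in (0 : ℝ)..1, r ^ 2 * radialProfile f f' (r * s) = f s := by
  have hmaps : MapsTo (· * s) (uIcc (0 : ℝ) 1) (Icc (-1) 1) := by
    intro r hr
    rw [uIcc_of_le zero_le_one] at hr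
    constructor <;> nlinarith [hr.1, hr.2, hs.1, hs.2]
  have hderiv : ∀ r ∈ uIcc (0 : ℝ) 1,
      HasDerivAt (fun r => r ^ 3 * f (r * s)) (r ^ 2 * radialProfile f f' (r * s)) r := by
    intro r hr
    have h := (hasDerivAt_pow 3 r).mul ((hf _ (hmaps hr)).comp r (hasDerivAt_mul_const s))
    refine h.congr_deriv ?_
    simp only [radialProfile, Function.comp_apply]
    ring
  have hcont : ContinuousOn (fun r => r ^ 2 * radialProfile f f' (r * s)) (uIcc 0 1) :=
    (continuousOn_pow 2).mul
      ((continuousOn_radialProfile hf hf').comp (continuousOn_id.mul continuousOn_const) hmaps)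
  rw [integral_eq_sub_of_hasDerivAt hderiv hcont.intervalIntegrable]
  simp

lemma integral_radialProfile_mul_one_sub_sq :
    ∫ z in (-1 : ℝ)..1, radialProfile f f' z * (1 - z ^ 2) = 2 * ∫ z in (-1 : ℝ)..1, f z := by
  have hIcc : uIcc (-1 : ℝ) 1 = Icc (-1) 1 := uIcc_of_le (by norm_num)
  have hderiv : ∀ z ∈ uIcc (-1 : ℝ) 1, HasDerivAt (fun z => z * (1 - z ^ 2) * f z)
      (radialProfile f f' z * (1 - z ^ 2) - 2 * f z) z := by
    intro z hz
    rw [hIcc] at hz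
    have h := (((hasDerivAt_id z).mul ((hasDerivAt_const z 1).sub (hasDerivAt_pow 2 z))).mul
      (hf z hz))
    refine h.congr_deriv ?_
    simp only [radialProfile, Pi.mul_apply, Pi.sub_apply, id]
    ring
  have hprofile : IntervalIntegrable (fun z => radialProfile f f' z * (1 - z ^ 2)) volume (-1) 1 :=
    ((continuousOn_radialProfile hf hf').mul (by fun_prop)).intervalIntegrable_of_Icc (by norm_num)
  have hfint : IntervalIntegrable f volume (-1) 1 :=
    (HasDerivAt.continuousOn hf).intervalIntegrable_of_Icc (by norm_num)
  have h := integral_eq_sub_of_hasDerivAt hderiv (hprofile.sub (hfint.const_mul 2))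
  rw [integral_sub hprofile (hfint.const_mul 2), intervalIntegral.integral_const_mul] at h
  norm_num at h
  linarith

end RadialProfile

section Slicing

variable {E : Type*} [NormedAddCommGroup E] [InnerProductSpace ℝ E] [FiniteDimensional ℝ E]

lemma exists_orthonormalBasis_apply_zero_eq {n : ℕ} (hE : finrank ℝ E = n + 1) {e : E}
    (he : ‖e‖ = 1) : ∃ b : OrthonormalBasis (Fin (n + 1)) ℝ E, b 0 = e := by
  have hv : Orthonormal ℝ (({0} : Set (Fin (n + 1))).domRestrict fun _ => e) :=
    ⟨fun _ => he, fun i j hij => absurd (Subtype.ext (i.2.trans j.2.symm)) hij⟩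
  obtain ⟨b, hb⟩ := hv.exists_orthonormalBasis_extension_of_card_eq (by simpa using hE)
  exact ⟨b, hb 0 rfl⟩

lemma exists_measurePreserving_inner_prod [MeasurableSpace E] [BorelSpace E] {n : ℕ}
    (hE : finrank ℝ E = n + 1) {e : E} (he : ‖e‖ = 1) :
    ∃ φ : E ≃ᵐ ℝ × (Fin n → ℝ), MeasurePreserving φ ∧
      ∀ y, (φ y).1 = ⟪e, y⟫ ∧ ‖y‖ ^ 2 = (φ y).1 ^ 2 + ∑ j, (φ y).2 j ^ 2 := by
  obtain ⟨b, hb⟩ := exists_orthonormalBasis_apply_zero_eq hE he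
  refine ⟨b.measurableEquiv.trans ((MeasurableEquiv.toLp 2 _).symm.trans
      (MeasurableEquiv.piFinSuccAbove (fun _ => ℝ) 0)),
    b.measurePreserving_measurableEquiv.trans
      ((EuclideanSpace.volume_preserving_symm_measurableEquiv_toLp _).trans
        (volume_preserving_piFinSuccAbove _ 0)), fun y => ⟨?_, ?_⟩⟩
  · change b.repr y 0 = _
    rw [b.repr_apply_apply, hb]
  · change ‖y‖ ^ 2 = b.repr y 0 ^ 2 + ∑ j, b.repr y (Fin.succAbove 0 j) ^ 2
    rw [← b.repr.norm_map, EuclideanSpace.norm_sq_eq, Fin.sum_univ_succAbove _ 0]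
    simp only [Real.norm_eq_abs, sq_abs]

end Slicing

lemma volume_sum_sq_lt (a : ℝ) :
    volume {w : Fin 2 → ℝ | ∑ j, w j ^ 2 < a} = ENNReal.ofReal a * ENNReal.ofReal π := by
  have hball : (MeasurableEquiv.toLp 2 (Fin 2 → ℝ)).symm ⁻¹' {w | ∑ j, w j ^ 2 < a}
      = ball (0 : EuclideanSpace ℝ (Fin 2)) √a := by
    ext z
    rw [mem_ball_zero_iff, EuclideanSpace.norm_eq,
      sqrt_lt_sqrt_iff (Finset.sum_nonneg fun j _ => sq_nonneg _)]
    simp only [Real.norm_eq_abs, sq_abs]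
    rfl
  rw [← (EuclideanSpace.volume_preserving_symm_measurableEquiv_toLp _).measure_preimage
    (measurableSet_lt (by fun_prop) measurable_const).nullMeasurableSet, hball,
    EuclideanSpace.volume_ball_fin_two, ← ENNReal.ofReal_pow (sqrt_nonneg a), sq_sqrt',
    ENNReal.ofReal_max, ENNReal.ofReal_zero, max_eq_left zero_le]

lemma integral_indicator_sum_sq_lt_one {G : ℝ → ℝ}
    (hG : Integrable ({p : ℝ × (Fin 2 → ℝ) | p.1 ^ 2 + ∑ j, p.2 j ^ 2 < 1}.indicator
      fun p => G p.1)) :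
    ∫ p : ℝ × (Fin 2 → ℝ), {p | p.1 ^ 2 + ∑ j, p.2 j ^ 2 < 1}.indicator (fun p => G p.1) p
      = π * ∫ z in (-1 : ℝ)..1, G z * (1 - z ^ 2) := by
  have hslice : ∀ z : ℝ,
      ∫ w : Fin 2 → ℝ, {p : ℝ × (Fin 2 → ℝ) | p.1 ^ 2 + ∑ j, p.2 j ^ 2 < 1}.indicator
        (fun p => G p.1) (z, w)
        = (Ioo (-1 : ℝ) 1).indicator (fun z => π * (G z * (1 - z ^ 2))) z := by
    intro z
    have hset : {w : Fin 2 → ℝ | z ^ 2 + ∑ j, w j ^ 2 < 1}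
        = {w | ∑ j, w j ^ 2 < 1 - z ^ 2} := by
      ext w
      simp only [mem_ofPred_eq]
      constructor <;> intro h <;> linarith
    change ∫ w, {w : Fin 2 → ℝ | z ^ 2 + ∑ j, w j ^ 2 < 1}.indicator (fun _ => G z) w = _
    rw [hset, integral_indicator_const _ (measurableSet_lt (by fun_prop) measurable_const),
      measureReal_def, volume_sum_sq_lt, ENNReal.toReal_mul, ENNReal.toReal_ofReal pi_pos.le,
      smul_eq_mul]
    by_cases hz : z ∈ Ioo (-1 : ℝ) 1
    · rw [indicator_of_mem hz, ENNReal.toReal_ofReal (by nlinarith [hz.1, hz.2])]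
      ring
    · have hz' : 1 - z ^ 2 ≤ 0 := by
        rw [mem_Ioo, not_and_or, not_lt, not_lt] at hz
        rcases hz with h | h <;> nlinarith
      rw [indicator_of_notMem hz, ENNReal.ofReal_eq_zero.2 hz', ENNReal.toReal_zero, zero_mul,
        zero_mul]
  rw [volume_eq_prod, integral_prod _ (by rwa [← volume_eq_prod]),
    integral_congr_ae (.of_forall hslice), MeasureTheory.integral_indicator measurableSet_Ioo,
    ← integral_Ioc_eq_integral_Ioo, ← intervalIntegral.integral_of_le (by norm_num),
    intervalIntegral.integral_const_mul]

section Archimedes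

variable {E : Type*} [NormedAddCommGroup E] [InnerProductSpace ℝ E]

lemma integral_Ioi_sq_mul_indicator_ball (G : ℝ → ℝ) (e : E) {ω : E} (hω : ‖ω‖ = 1) :
    ∫ r in Ioi (0 : ℝ), r ^ 2 * (ball (0 : E) 1).indicator (fun y => G ⟪e, y⟫) (r • ω)
      = ∫ r in (0 : ℝ)..1, r ^ 2 * G (r * ⟪e, ω⟫) := by
  have hradial : EqOn (fun r : ℝ => r ^ 2 * (ball (0 : E) 1).indicator (fun y => G ⟪e, y⟫) (r • ω))
      ((Iio 1).indicator fun r => r ^ 2 * G (r * ⟪e, ω⟫)) (Ioi 0) := by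
    intro r hr
    dsimp only
    have hnorm : ‖r • ω‖ = r := by rw [norm_smul, hω, mul_one, norm_of_nonneg (le_of_lt hr)]
    by_cases h1 : r < 1
    · rw [indicator_of_mem (by rwa [mem_ball_zero_iff, hnorm]), indicator_of_mem (mem_Iio.2 h1),
        real_inner_smul_right]
    · rw [indicator_of_notMem (by rwa [mem_ball_zero_iff, hnorm]),
        indicator_of_notMem (fun h => h1 (mem_Iio.1 h)), mul_zero]
  rw [setIntegral_congr_fun measurableSet_Ioi hradial, setIntegral_indicator measurableSet_Iio,
    Ioi_inter_Iio, integral_of_le zero_le_one, integral_Ioc_eq_integral_Ioo]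

variable [FiniteDimensional ℝ E] [MeasurableSpace E] [BorelSpace E]

theorem integral_toSphere_comp_inner (hE : finrank ℝ E = 3) {f f' : ℝ → ℝ}
    (hf : ∀ z ∈ Icc (-1 : ℝ) 1, HasDerivAt f (f' z) z) (hf' : ContinuousOn f' (Icc (-1) 1))
    {e : E} (he : ‖e‖ = 1) :
    ∫ ω : sphere (0 : E) 1, f ⟪e, (ω : E)⟫ ∂(volume : Measure E).toSphere
      = 2 * π * ∫ z in (-1 : ℝ)..1, f z := by
  have : Nontrivial E := Module.nontrivial_of_finrank_eq_succ hE
  set F : E → ℝ := (ball (0 : E) 1).indicator fun y => radialProfile f f' ⟪e, y⟫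
  have hinner : MapsTo (fun y => ⟪e, y⟫) (closedBall (0 : E) 1) (Icc (-1) 1) := by
    intro y hy
    refine abs_le.1 ((abs_real_inner_le_norm e y).trans ?_)
    rw [he, one_mul]
    exact mem_closedBall_zero_iff.1 hy
  have hF : Integrable F := by
    refine (integrable_indicator_iff measurableSet_ball).2 (IntegrableOn.mono_set ?_
      ball_subset_closedBall)
    exact ((continuousOn_radialProfile hf hf').comp (by fun_prop) hinner).integrableOn_compact
      (isCompact_closedBall _ _)
  obtain ⟨φ, hφ, hφ_apply⟩ := exists_measurePreserving_inner_prod (n := 2) hE he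
  have hFφ : F = fun y => {p : ℝ × (Fin 2 → ℝ) | p.1 ^ 2 + ∑ j, p.2 j ^ 2 < 1}.indicator
      (fun p => radialProfile f f' p.1) (φ y) := by
    have hball : ball (0 : E) 1 = φ ⁻¹' {p | p.1 ^ 2 + ∑ j, p.2 j ^ 2 < 1} := by
      ext y
      rw [mem_ball_zero_iff, ← sq_lt_one_iff₀ (norm_nonneg y), (hφ_apply y).2]
      rfl
    have hprofile : (fun y => radialProfile f f' ⟪e, y⟫) = (fun p => radialProfile f f' p.1) ∘ φ :=
      funext fun y => by rw [Function.comp_apply, (hφ_apply y).1]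
    funext y
    rw [← indicator_comp_right, ← hball, ← hprofile]
  calc ∫ ω : sphere (0 : E) 1, f ⟪e, (ω : E)⟫ ∂(volume : Measure E).toSphere
      = ∫ ω : sphere (0 : E) 1,
          (∫ r in Ioi (0 : ℝ), r ^ (finrank ℝ E - 1) • F (r • (ω : E))) ∂volume.toSphere := by
        refine integral_congr_ae (.of_forall fun ω => ?_)
        have hω : ‖(ω : E)‖ = 1 := mem_sphere_zero_iff_norm.1 ω.2
        have hs : ⟪e, (ω : E)⟫ ∈ Icc (-1 : ℝ) 1 := hinner (sphere_subset_closedBall ω.2)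
        simp only [hE, smul_eq_mul]
        rw [integral_Ioi_sq_mul_indicator_ball _ _ hω, integral_sq_mul_radialProfile hf hf' hs]
    _ = ∫ y, F y := (integral_eq_integral_toSphere_integral_Ioi volume hF).symm
    _ = π * ∫ z in (-1 : ℝ)..1, radialProfile f f' z * (1 - z ^ 2) := by
        rw [hFφ] at hF ⊢
        rw [hφ.integral_comp', integral_indicator_sum_sq_lt_one
          ((hφ.integrable_comp_emb φ.measurableEmbedding).1 hF)]
    _ = 2 * π * ∫ z in (-1 : ℝ)..1, f z := by
        rw [integral_radialProfile_mul_one_sub_sq hf hf']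
        ring

end Archimedes

section AffinePower

variable {b c p : ℝ}

lemma add_mul_pos_of_abs_lt (hbc : |b| < c) {z : ℝ} (hz : z ∈ Icc (-1 : ℝ) 1) :
    0 < c + b * z := by
  have hbz : |b * z| ≤ |b| := by
    rw [abs_mul]
    exact mul_le_of_le_one_right (abs_nonneg b) (abs_le.2 hz)
  linarith [neg_abs_le (b * z)]

lemma integral_add_mul_rpow (hb : b ≠ 0) (hbc : |b| < c) (hp : p + 1 ≠ 0) :
    ∫ z in (-1 : ℝ)..1, (c + b * z) ^ p
      = ((c + b) ^ (p + 1) - (c - b) ^ (p + 1)) / (b * (p + 1)) := by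
  have hpos : 0 < b * (-1) + c ∧ 0 < b * 1 + c := by
    constructor <;> linarith [add_mul_pos_of_abs_lt hbc (z := -1) (by norm_num),
      add_mul_pos_of_abs_lt hbc (z := 1) (by norm_num)]
  simp_rw [add_comm c (b * _)]
  rw [intervalIntegral.integral_comp_mul_add (fun x => x ^ p) hb,
    integral_rpow (Or.inr ⟨by rintro rfl; norm_num at hp, notMem_uIcc_of_lt hpos.1 hpos.2⟩),
    smul_eq_mul]
  field_simp
  ring_nf

variable {E : Type*} [NormedAddCommGroup E] [InnerProductSpace ℝ E] [FiniteDimensional ℝ E]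
  [MeasurableSpace E] [BorelSpace E]

theorem integral_toSphere_add_mul_inner_rpow (hE : finrank ℝ E = 3) {e : E} (he : ‖e‖ = 1)
    (hb : b ≠ 0) (hbc : |b| < c) (hp : p + 1 ≠ 0) :
    ∫ ω : sphere (0 : E) 1, (c + b * ⟪e, (ω : E)⟫) ^ p ∂(volume : Measure E).toSphere
      = 2 * π * ((c + b) ^ (p + 1) - (c - b) ^ (p + 1)) / (b * (p + 1)) := by
  have hderiv : ∀ z ∈ Icc (-1 : ℝ) 1,
      HasDerivAt (fun z => (c + b * z) ^ p) (b * p * (c + b * z) ^ (p - 1)) z := by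
    intro z hz
    have h := (((hasDerivAt_id z).const_mul b).const_add c).rpow_const (p := p)
      (Or.inl (add_mul_pos_of_abs_lt hbc hz).ne')
    exact h.congr_deriv (by simp only [id, mul_one])
  have hcont : ContinuousOn (fun z => b * p * (c + b * z) ^ (p - 1)) (Icc (-1 : ℝ) 1) :=
    continuousOn_const.mul (ContinuousOn.rpow_const (by fun_prop)
      fun z hz => Or.inl (add_mul_pos_of_abs_lt hbc hz).ne')
  rw [integral_toSphere_comp_inner hE hderiv hcont he, integral_add_mul_rpow hb hbc hp,
    mul_div_assoc]

end AffinePower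

lemma jap_sq (s : ℝ) : jap s ^ 2 = 1 + s ^ 2 := sq_sqrt (by positivity)

lemma jap_rpow_two_mul (s q : ℝ) : jap s ^ (2 * q) = (1 + s ^ 2) ^ q := by
  rw [jap, sqrt_eq_rpow, ← rpow_mul (by positivity)]
  ring_nf

theorem stmt1 (δ : ℝ) (hδ : δ ≠ -2) (t : ℝ) (ht : 0 < t) (x : E3) (hx : x ≠ 0) :
    (∫ ω : Metric.sphere (0 : E3) 1, ((1 : ℝ) + ‖x + t • (ω : E3)‖ ^ 2) ^ (δ / 2) ∂sphereM)
      = 8 * Real.pi * (jap (t - ‖x‖) ^ (2 + δ) - jap (t + ‖x‖) ^ (2 + δ)) /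
          ((2 + δ) * (jap (t - ‖x‖) ^ 2 - jap (t + ‖x‖) ^ 2)) := by
  set e : E3 := ‖x‖⁻¹ • x
  have he : ‖e‖ = 1 := norm_smul_inv_norm hx
  have hb : 2 * t * ‖x‖ ≠ 0 := by positivity
  have hbc : |2 * t * ‖x‖| < 1 + t ^ 2 + ‖x‖ ^ 2 := by
    rw [abs_of_pos (by positivity)]
    nlinarith [sq_nonneg (t - ‖x‖)]
  have hp : δ / 2 + 1 ≠ 0 := by contrapose! hδ; linarith
  have hintegrand : ∀ ω : sphere (0 : E3) 1,
      1 + ‖x + t • (ω : E3)‖ ^ 2 = 1 + t ^ 2 + ‖x‖ ^ 2 + 2 * t * ‖x‖ * ⟪e, (ω : E3)⟫ := by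
    intro ω
    rw [norm_add_sq_real, real_inner_smul_right, real_inner_smul_left, norm_smul,
      mem_sphere_zero_iff_norm.1 ω.2, norm_of_nonneg ht.le]
    field_simp
    ring
  simp_rw [hintegrand]
  rw [sphereM, integral_toSphere_add_mul_inner_rpow finrank_euclideanSpace_fin he hb hbc hp,
    show 2 + δ = 2 * (δ / 2 + 1) by ring,
    jap_rpow_two_mul, jap_rpow_two_mul, jap_sq, jap_sq,
    show 1 + t ^ 2 + ‖x‖ ^ 2 + 2 * t * ‖x‖ = 1 + (t + ‖x‖) ^ 2 by ring,
    show 1 + t ^ 2 + ‖x‖ ^ 2 - 2 * t * ‖x‖ = 1 + (t - ‖x‖) ^ 2 by ring,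
    show 1 + (t - ‖x‖) ^ 2 - (1 + (t + ‖x‖) ^ 2) = -(2 * (2 * t * ‖x‖)) by ring]
  field_simp
  ring
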